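/- Let (Ω, ℱ, ℙ) be a probability space and Z a nonnegative continuous semimartingale satisfying dZ_t = β_t dt + α_t √(Z_t) dB_t with Z₀ = z ≥ 0, where B is a Brownian motion, |β_t| ≤ λ and λ^{−1} ≤ |α_t|² ≤ λ for a constant λ ≥ 1. If z < 2, then for every s > 0, E[sup_{0 ≤ t ≤ s} |√(Z_{t∧τ}) − √z|²] ≤ λ s + C(λ)√s, where τ = inf{t : |√(Z_t) − √z| ≥ 1} and C(λ) depends only on λ. -/

import Mathlib

/-!
Up to time `τ` the path `√Z` stays within distance `1` of `√z` (intermediate value theorem), so by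
`|√a - √b|² ≤ |a - b|` the integrand is at most `min 1 |Z_t - z| ≤ λ s + min 1 |M_t|`. Since
`M² - ∫ α² Z` is a martingale, `E M_t² ≤ λ E ∫₀ˢ Z ≤ λ s (z + λ s)`; Doob's maximal inequality for
the submartingale `M²` on the dyadic grids of `[0, s]` bounds the tails of `max |M|` by
`λ s (z + λ s) / r²`, and integrating the tails of the capped maximum gives
`E min 1 (sup |M|) ≤ 2 √(λ s (z + λ s)) ≤ 4 λ √s` for `s < 1`; for `s ≥ 1` the integrand is at
most `1 ≤ λ s`. Continuity of `Z` passes from dyadic times to all of `[0, s]`, and `E ∫₀ˢ Z` is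
reached through Riemann sums and Fatou's lemma because `Z` need not be jointly measurable.
-/

open MeasureTheory Real Set Filter Topology

theorem abs_sqrt_sub_sqrt_sq_le {a b : ℝ} (ha : 0 ≤ a) (hb : 0 ≤ b) :
    |√a - √b| ^ 2 ≤ |a - b| := by
  have hsum : |√a - √b| ≤ √a + √b :=
    abs_sub_le_iff.2 ⟨by linarith [sqrt_nonneg b], by linarith [sqrt_nonneg a]⟩
  have hprod : (√a - √b) * (√a + √b) = a - b := by
    ring_nf
    rw [sq_sqrt ha, sq_sqrt hb]
  calc |√a - √b| ^ 2 ≤ |√a - √b| * (√a + √b) := by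
        rw [sq]; exact mul_le_mul_of_nonneg_left hsum (abs_nonneg _)
    _ = |a - b| := by
        rw [← hprod, abs_mul, abs_of_nonneg (add_nonneg (sqrt_nonneg a) (sqrt_nonneg b))]

theorem two_mul_sqrt_le_of_lt_one {lam z s : ℝ} (hlam : 1 ≤ lam) (hz2 : z < 2) (hs : 0 ≤ s)
    (hs1 : s < 1) : 2 * √(lam * (s * (z + lam * s))) ≤ 4 * lam * √s := by
  have hle : lam * (s * (z + lam * s)) ≤ (2 * lam) ^ 2 * s := by
    have : z + lam * s ≤ 4 * lam := by nlinarith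
    nlinarith [mul_le_mul_of_nonneg_left this (by positivity : 0 ≤ lam * s)]
  calc 2 * √(lam * (s * (z + lam * s))) ≤ 2 * √((2 * lam) ^ 2 * s) := by gcongr
    _ = 4 * lam * √s := by
        rw [sqrt_mul (sq_nonneg _), sqrt_sq (by positivity)]
        ring

theorem le_of_le_sInf_setOf_le {g : ℝ → ℝ} (hg : Continuous g) {c u : ℝ} (h0 : g 0 ≤ c)
    (hu : 0 ≤ u) (hu_le : u ≤ sInf {t | 0 ≤ t ∧ c ≤ g t}) : g u ≤ c := by
  by_contra! hlt
  obtain ⟨v, hv, hgv⟩ := intermediate_value_Icc hu hg.continuousOn ⟨h0, hlt.le⟩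
  have hvu : u ≤ v := hu_le.trans (csInf_le ⟨0, fun t ht => ht.1⟩ ⟨hv.1, hgv.ge⟩)
  exact hlt.ne' (le_antisymm hv.2 hvu ▸ hgv)

theorem exists_tendsto_dyadic {s v : ℝ} (hs : 0 < s) (hv : v ∈ Icc 0 s) :
    ∃ k : ℕ → ℕ, (∀ n, k n ≤ 2 ^ n) ∧ Tendsto (fun n => (k n : ℝ) * s / 2 ^ n) atTop (𝓝 v) := by
  set x : ℕ → ℝ := fun n => v / s * 2 ^ n
  have hx0 (n : ℕ) : 0 ≤ x n := by have := hv.1; positivity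
  have hxv (n : ℕ) : x n * s / 2 ^ n = v := by simp only [x]; field_simp
  refine ⟨fun n => ⌊x n⌋₊, fun n => Nat.floor_le_of_le ?_, ?_⟩
  · have : v / s ≤ 1 := (div_le_one hs).2 hv.2
    push_cast
    nlinarith [pow_pos (two_pos : (0:ℝ) < 2) n]
  · have hmesh : Tendsto (fun n : ℕ => s / 2 ^ n) atTop (𝓝 0) :=
      (tendsto_pow_atTop_atTop_of_one_lt one_lt_two).const_div_atTop s
    refine tendsto_of_tendsto_of_tendsto_of_le_of_le (by simpa using tendsto_const_nhds.sub hmesh)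
      tendsto_const_nhds (fun n => ?_) (fun n => ?_)
    · calc v - s / 2 ^ n = (x n - 1) * s / 2 ^ n := by rw [← hxv n]; ring
        _ ≤ ⌊x n⌋₊ * s / 2 ^ n := by gcongr; linarith [Nat.lt_floor_add_one (x n)]
    · calc ⌊x n⌋₊ * s / 2 ^ n ≤ x n * s / 2 ^ n := by gcongr; exact Nat.floor_le (hx0 n)
        _ = v := hxv n

theorem intervalIntegrable_min_one_div_sq (b : ℝ) {a c : ℝ} (hb : 0 ≤ b) :
    IntervalIntegrable (fun t => min 1 (b / t ^ 2)) volume a c := by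
  refine (intervalIntegrable_const (c := (1:ℝ))).mono_fun
    (by fun_prop : Measurable fun t : ℝ => min 1 (b / t ^ 2)).aestronglyMeasurable
    (.of_forall fun t => ?_)
  dsimp only
  rw [norm_of_nonneg (le_min zero_le_one (by positivity)), norm_one]
  exact min_le_left _ _

theorem intervalIntegral_min_one_div_sq_le {b : ℝ} (hb : 0 ≤ b) :
    ∫ t in (0:ℝ)..1, min 1 (b / t ^ 2) ≤ 2 * √b := by
  set g : ℝ → ℝ := fun t => min 1 (b / t ^ 2)
  have hg_int (a c : ℝ) : IntervalIntegrable g volume a c :=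
    intervalIntegrable_min_one_div_sq b hb
  have hg_le_length : ∀ a c, a ≤ c → ∫ t in a..c, g t ≤ c - a := fun a c hac => by
    simpa using intervalIntegral.integral_mono_on hac (hg_int a c) intervalIntegrable_const
      fun t _ => min_le_left 1 (b / t ^ 2)
  obtain hb1 | hb1 := le_or_gt 1 √b
  · linarith [hg_le_length 0 1 zero_le_one]
  obtain hb0 | hb0 := hb.eq_or_lt
  · simp [g, ← hb0]
  set c := √b
  have hc : 0 < c := sqrt_pos.2 hb0
  have htail : ∫ t in c..1, g t ≤ c - b := calc
    ∫ t in c..1, g t ≤ ∫ t in c..1, b * t ^ (-2:ℤ) := by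
      refine intervalIntegral.integral_mono_on hb1.le (hg_int c 1) ?_ fun t ht => ?_
      · exact (continuousOn_const.mul (continuousOn_id.zpow₀ _ fun t ht =>
          .inl (hc.trans_le (uIcc_of_le hb1.le ▸ ht).1).ne')).intervalIntegrable
      · simp [g, zpow_neg, div_eq_mul_inv]
    _ = c - b := by
      rw [intervalIntegral.integral_const_mul, integral_zpow
        (.inr ⟨by norm_num, fun h => (hc.trans_le (uIcc_of_le hb1.le ▸ h).1).false⟩),
        ← sq_sqrt hb]
      norm_num
      field_simp
      ring
  rw [← intervalIntegral.integral_add_adjacent_intervals (hg_int 0 c) (hg_int c 1)]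
  linarith [hg_le_length 0 c hc.le]

theorem tendsto_riemannSum_intervalIntegral {g : ℝ → ℝ} (hg : Continuous g) {s : ℝ} (hs : 0 ≤ s) :
    Tendsto (fun n : ℕ => s / n * ∑ k ∈ Finset.range n, g (k * s / n)) atTop
      (𝓝 (∫ u in (0:ℝ)..s, g u)) := by
  rw [Metric.tendsto_atTop]
  intro ε hε
  obtain ⟨δ, hδ, hg_unif⟩ := Metric.uniformContinuousOn_iff.1
    (isCompact_Icc.uniformContinuousOn_of_continuous hg.continuousOn (s := Icc 0 s))
    (ε / (s + 1)) (by positivity)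
  obtain ⟨N, hN⟩ := exists_nat_gt (s / δ)
  refine ⟨N + 1, fun n hn => ?_⟩
  have hn0 : (0:ℝ) < n := by exact_mod_cast (Nat.succ_pos N).trans_le hn
  have hmesh : s / n < δ := by
    rw [div_lt_iff₀ hn0]
    rw [div_lt_iff₀ hδ] at hN
    nlinarith [(by exact_mod_cast hn : (N:ℝ) + 1 ≤ n)]
  set a : ℕ → ℝ := fun k => k * s / n
  have ha_succ (k : ℕ) : a (k + 1) = a k + s / n := by simp only [a]; push_cast; ring
  have ha_mem {k : ℕ} (hk : k ≤ n) : a k ∈ Icc 0 s :=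
    ⟨by positivity, div_le_of_le_mul₀ hn0.le hs (by
      rw [mul_comm s]; exact mul_le_mul_of_nonneg_right (by exact_mod_cast hk) hs)⟩
  have hcell (k : ℕ) (hk : k < n) :
      |s / n * g (a k) - ∫ u in a k..a (k + 1), g u| ≤ ε / (s + 1) * (s / n) := by
    have hle : a k ≤ a (k + 1) := by rw [ha_succ]; linarith [div_nonneg hs hn0.le]
    rw [← abs_neg, neg_sub, show s / n * g (a k) = ∫ _ in a k..a (k + 1), g (a k) by simp [ha_succ],
      ← intervalIntegral.integral_sub (hg.intervalIntegrable _ _) intervalIntegrable_const]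
    have hlen : |a (k + 1) - a k| = s / n := by
      rw [ha_succ, add_sub_cancel_left, abs_of_nonneg (div_nonneg hs hn0.le)]
    refine (intervalIntegral.norm_integral_le_of_norm_le_const
      (f := fun u => g u - g (a k)) fun u hu => ?_).trans_eq (congrArg _ hlen)
    rw [uIoc_of_le hle] at hu
    have hu_mem : u ∈ Icc 0 s := ⟨(ha_mem hk.le).1.trans hu.1.le, hu.2.trans (ha_mem hk).2⟩
    refine (hg_unif u hu_mem (a k) (ha_mem hk.le) ?_).le
    rw [dist_eq, abs_of_pos (sub_pos.2 hu.1)]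
    linarith [hu.2, ha_succ k]
  have hsum : ∫ u in (0:ℝ)..s, g u = ∑ k ∈ Finset.range n, ∫ u in a k..a (k + 1), g u := by
    rw [intervalIntegral.sum_integral_adjacent_intervals fun k _ => hg.intervalIntegrable _ _]
    simp [a, hn0.ne']
  rw [dist_eq, hsum, Finset.mul_sum, ← Finset.sum_sub_distrib]
  calc |∑ k ∈ Finset.range n, (s / n * g (a k) - ∫ u in a k..a (k + 1), g u)|
      ≤ ∑ k ∈ Finset.range n, ε / (s + 1) * (s / n) :=
        (Finset.abs_sum_le_sum_abs _ _).trans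
          (Finset.sum_le_sum fun k hk => hcell k (Finset.mem_range.1 hk))
    _ = ε * (s / (s + 1)) := by
      rw [Finset.sum_const, Finset.card_range, nsmul_eq_mul]; field_simp
    _ < ε := mul_lt_of_lt_one_right hε ((div_lt_one (by positivity)).2 (lt_add_one s))

theorem intervalIntegral_mul_le_mul_intervalIntegral {f g : ℝ → ℝ} {lam t s : ℝ}
    (hg : Continuous g) (hg0 : ∀ u, 0 ≤ g u) (hf0 : ∀ u, 0 ≤ f u) (hf : ∀ u, f u ≤ lam)
    (ht : 0 ≤ t) (hts : t ≤ s) : ∫ u in (0:ℝ)..t, f u * g u ≤ lam * ∫ u in (0:ℝ)..s, g u := by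
  have hlam : 0 ≤ lam := (hf0 0).trans (hf 0)
  by_cases hfg : IntervalIntegrable (fun u => f u * g u) volume 0 t
  · calc ∫ u in (0:ℝ)..t, f u * g u ≤ ∫ u in (0:ℝ)..t, lam * g u :=
          intervalIntegral.integral_mono_on ht hfg ((hg.intervalIntegrable _ _).const_mul lam)
            fun u _ => mul_le_mul_of_nonneg_right (hf u) (hg0 u)
      _ = lam * ∫ u in (0:ℝ)..t, g u := intervalIntegral.integral_const_mul _ _
      _ ≤ lam * ∫ u in (0:ℝ)..s, g u := mul_le_mul_of_nonneg_left
          (intervalIntegral.integral_mono_interval le_rfl ht hts (.of_forall hg0)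
            (hg.intervalIntegrable _ _)) hlam
  · rw [intervalIntegral.integral_undef hfg]
    exact mul_nonneg hlam (intervalIntegral.integral_nonneg (ht.trans hts) fun u _ => hg0 u)

namespace MeasureTheory

variable {Ω ι κ : Type*} {m : MeasurableSpace Ω} {μ : Measure Ω} [Preorder ι] [Preorder κ]

theorem integrable_min_one [IsFiniteMeasure μ] {X : Ω → ℝ} (hX : Measurable X) (hX0 : 0 ≤ X) :
    Integrable (fun ω => min 1 (X ω)) μ :=
  .of_bound (measurable_const.min hX).aestronglyMeasurable 1 <| .of_forall fun ω => by
    rw [norm_of_nonneg (le_min zero_le_one (hX0 ω))]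
    exact min_le_left _ _

theorem integral_min_one_le_of_measureReal_le [IsProbabilityMeasure μ] {X : Ω → ℝ}
    (hX : Measurable X) (hX0 : 0 ≤ X) {b : ℝ} (hb : 0 ≤ b) (htail : ∀ t, 0 < t → μ.real {ω | t ≤ X ω} ≤ b / t ^ 2) :
    ∫ ω, min 1 (X ω) ∂μ ≤ 2 * √b := by
  rw [(integrable_min_one hX hX0).integral_eq_integral_Ioc_meas_le
    (.of_forall fun ω => le_min zero_le_one (hX0 ω)) (.of_forall fun ω => min_le_left _ _)]
  calc ∫ t in Ioc 0 1, μ.real {ω | t ≤ min 1 (X ω)}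
      ≤ ∫ t in Ioc 0 1, min 1 (b / t ^ 2) := by
        refine integral_mono_of_nonneg (.of_forall fun t => measureReal_nonneg)
          ((intervalIntegrable_iff_integrableOn_Ioc_of_le zero_le_one).1
            (intervalIntegrable_min_one_div_sq b hb))
          ((ae_restrict_iff' measurableSet_Ioc).2 (.of_forall fun t ht => ?_))
        have hset : {ω | t ≤ min 1 (X ω)} = {ω | t ≤ X ω} := by
          ext ω
          simp [ht.2]
        dsimp only
        rw [hset]
        exact le_min measureReal_le_one (htail t ht.1)
    _ = ∫ t in (0:ℝ)..1, min 1 (b / t ^ 2) := (intervalIntegral.integral_of_le zero_le_one).symm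
    _ ≤ 2 * √b := intervalIntegral_min_one_div_sq_le hb

theorem lintegral_ofReal_intervalIntegral_le {Z Y : ℝ → Ω → ℝ} {s c : ℝ} (hs : 0 ≤ s)
    (hZ : ∀ ω, Continuous fun t => Z t ω) (hZ0 : ∀ t ∈ Icc 0 s, ∀ ω, 0 ≤ Z t ω)
    (hZY : ∀ t ∈ Icc 0 s, ∀ ω, Z t ω ≤ Y t ω) (hY : ∀ t ∈ Icc 0 s, Integrable (Y t) μ)
    (hYc : ∀ t ∈ Icc 0 s, ∫ ω, Y t ω ∂μ ≤ c) :
    ∫⁻ ω, ENNReal.ofReal (∫ u in (0:ℝ)..s, Z u ω) ∂μ ≤ ENNReal.ofReal (s * c) := by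
  set R : ℕ → Ω → ℝ := fun n ω => s / n * ∑ k ∈ Finset.range n, Y (k * s / n) ω
  have hgrid {n k : ℕ} (hk : k ∈ Finset.range n) : (k : ℝ) * s / n ∈ Icc 0 s := by
    have hkn : (k : ℝ) < n := by exact_mod_cast Finset.mem_range.1 hk
    exact ⟨by positivity, div_le_of_le_mul₀ (by positivity) hs (by nlinarith)⟩
  have hR_int (n : ℕ) : Integrable (R n) μ :=
    (integrable_finsetSum _ fun k hk => hY _ (hgrid hk)).const_mul _
  have hZR (n : ℕ) (ω : Ω) : s / n * ∑ k ∈ Finset.range n, Z (k * s / n) ω ≤ R n ω :=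
    mul_le_mul_of_nonneg_left (Finset.sum_le_sum fun k hk => hZY _ (hgrid hk) ω) (by positivity)
  have hR0 (n : ℕ) (ω : Ω) : 0 ≤ R n ω := (mul_nonneg (by positivity)
    (Finset.sum_nonneg fun k hk => hZ0 _ (hgrid hk) ω)).trans (hZR n ω)
  have hpath (ω : Ω) : ENNReal.ofReal (∫ u in (0:ℝ)..s, Z u ω)
      ≤ liminf (fun n => ENNReal.ofReal (R n ω)) atTop := by
    rw [← ((ENNReal.continuous_ofReal.tendsto _).comp
      (tendsto_riemannSum_intervalIntegral (hZ ω) hs)).liminf_eq]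
    exact liminf_le_liminf (.of_forall fun n => ENNReal.ofReal_le_ofReal (hZR n ω))
  have hR_lint {n : ℕ} (hn : 1 ≤ n) : ∫⁻ ω, ENNReal.ofReal (R n ω) ∂μ ≤ ENNReal.ofReal (s * c) := by
    rw [← ofReal_integral_eq_lintegral_ofReal (hR_int n) (.of_forall (hR0 n))]
    refine ENNReal.ofReal_le_ofReal ?_
    have hn0 : (0 : ℝ) < n := by exact_mod_cast hn
    calc ∫ ω, R n ω ∂μ = s / n * ∑ k ∈ Finset.range n, ∫ ω, Y (k * s / n) ω ∂μ := by
          rw [integral_const_mul, integral_finsetSum _ fun k hk => hY _ (hgrid hk)]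
      _ ≤ s / n * ∑ _k ∈ Finset.range n, c :=
          mul_le_mul_of_nonneg_left (Finset.sum_le_sum fun k hk => hYc _ (hgrid hk))
            (by positivity)
      _ = s * c := by rw [Finset.sum_const, Finset.card_range, nsmul_eq_mul]; field_simp
  calc ∫⁻ ω, ENNReal.ofReal (∫ u in (0:ℝ)..s, Z u ω) ∂μ
      ≤ ∫⁻ ω, liminf (fun n => ENNReal.ofReal (R n ω)) atTop ∂μ := lintegral_mono hpath
    _ ≤ liminf (fun n => ∫⁻ ω, ENNReal.ofReal (R n ω) ∂μ) atTop :=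
        lintegral_liminf_le' fun n => (hR_int n).aemeasurable.ennreal_ofReal
    _ ≤ ENNReal.ofReal (s * c) :=
        liminf_le_of_frequently_le' ((eventually_ge_atTop 1).mono fun n hn => hR_lint hn).frequently

def Filtration.comp (ℱ : Filtration ι m) {u : κ → ι} (hu : Monotone u) : Filtration κ m :=
  ⟨fun k => ℱ (u k), fun _ _ hij => ℱ.mono (hu hij), fun k => ℱ.le (u k)⟩

theorem Martingale.comp_monotone {E : Type*} [NormedAddCommGroup E] [NormedSpace ℝ E]
    [CompleteSpace E] {ℱ : Filtration ι m} {f : ι → Ω → E} (hf : Martingale f ℱ μ)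
    {u : κ → ι} (hu : Monotone u) : Martingale (fun k => f (u k)) (ℱ.comp hu) μ :=
  ⟨fun k => hf.stronglyAdapted (u k), fun _ _ hij => hf.condExp_ae_eq (hu hij)⟩

theorem Martingale.submartingale_convex_comp [IsFiniteMeasure μ] {ℱ : Filtration ι m}
    {f : ι → Ω → ℝ} (hf : Martingale f ℱ μ) {φ : ℝ → ℝ} (hφ : ConvexOn ℝ univ φ)
    (hφc : Continuous φ) (hint : ∀ i, Integrable (fun ω => φ (f i ω)) μ) :
    Submartingale (fun i ω => φ (f i ω)) ℱ μ := by
  refine ⟨fun i => hφc.comp_stronglyMeasurable (hf.stronglyAdapted i), fun i j hij => ?_, hint⟩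
  filter_upwards [hf.condExp_ae_eq hij, hφ.map_condExp_le_univ (ℱ.le i)
    hφc.lowerSemicontinuous (hf.integrable j) (hint j)] with ω h1 h2
  simpa [h1, Function.comp_def] using h2

theorem Martingale.measureReal_le_sup'_abs_le [IsFiniteMeasure μ] {𝒢 : Filtration ℕ m}
    {X : ℕ → Ω → ℝ} (hX : Martingale X 𝒢 μ) (hX2 : ∀ k, Integrable (fun ω => X k ω ^ 2) μ)
    (n : ℕ) {t : ℝ} (ht : 0 < t) :
    μ.real {ω | t ≤ (Finset.range (n + 1)).sup' Finset.nonempty_range_add_one fun k => |X k ω|}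
      ≤ (∫ ω, X n ω ^ 2 ∂μ) / t ^ 2 := by
  have hsub := hX.submartingale_convex_comp even_two.convexOn_pow (continuous_pow 2) hX2
  have hdoob := maximal_ineq hsub (fun k ω => sq_nonneg (X k ω)) (ε := (t ^ 2).toNNReal) n
  rw [Real.coe_toNNReal _ (by positivity)] at hdoob
  set S := {ω | t ^ 2 ≤
    (Finset.range (n + 1)).sup' Finset.nonempty_range_add_one fun k => X k ω ^ 2}
  have hsubset : {ω | t ≤
      (Finset.range (n + 1)).sup' Finset.nonempty_range_add_one fun k => |X k ω|} ⊆ S := by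
    intro ω (hω : t ≤ _)
    show t ^ 2 ≤ _
    obtain ⟨k, hk, htk⟩ := (Finset.le_sup'_iff _).1 hω
    exact (Finset.le_sup'_iff Finset.nonempty_range_add_one).2 ⟨k, hk, by
      simpa only [sq_abs] using pow_le_pow_left₀ ht.le htk 2⟩
  have hS : t ^ 2 * μ.real S ≤ ∫ ω, X n ω ^ 2 ∂μ := by
    have hS_le := hdoob.trans <| ENNReal.ofReal_le_ofReal <|
      setIntegral_le_integral (hX2 n) (.of_forall fun ω => sq_nonneg (X n ω))
    have := ENNReal.toReal_mono ENNReal.ofReal_ne_top hS_le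
    rwa [ENNReal.toReal_mul, ENNReal.coe_toReal, Real.coe_toNNReal _ (by positivity),
      ENNReal.toReal_ofReal (integral_nonneg fun ω => sq_nonneg (X n ω))] at this
  rw [le_div_iff₀ (by positivity), mul_comm]
  exact (mul_le_mul_of_nonneg_left (measureReal_mono hsubset) (by positivity)).trans hS

theorem Martingale.integral_eq_of_le [IsFiniteMeasure μ] {ℱ : Filtration ℝ m} {f : ℝ → Ω → ℝ}
    (hf : Martingale f ℱ μ) {i j : ℝ} (hij : i ≤ j) : ∫ ω, f j ω ∂μ = ∫ ω, f i ω ∂μ := by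
  simpa using (hf.setIntegral_eq hij MeasurableSet.univ).symm

theorem integral_sq_le_of_martingale_sq_sub [IsFiniteMeasure μ] {ℱ : Filtration ℝ m}
    {M A : ℝ → Ω → ℝ} (hN : Martingale (fun t ω => M t ω ^ 2 - A t ω) ℱ μ)
    (hM0 : ∀ ω, M 0 ω = 0) (hA0 : ∀ ω, A 0 ω = 0) {t b : ℝ} (ht : 0 ≤ t) (hb : 0 ≤ b)
    (hMt : AEStronglyMeasurable (M t) μ) (hA : ∀ ω, 0 ≤ A t ω)
    (hAb : ∫⁻ ω, ENNReal.ofReal (A t ω) ∂μ ≤ ENNReal.ofReal b) :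
    Integrable (fun ω => M t ω ^ 2) μ ∧ ∫ ω, M t ω ^ 2 ∂μ ≤ b := by
  have hA_eq : A t = fun ω => M t ω ^ 2 - (M t ω ^ 2 - A t ω) := by ext ω; ring
  have hA_meas : AEStronglyMeasurable (A t) μ := by
    rw [hA_eq]
    exact (hMt.pow 2).sub ((hN.stronglyAdapted t).mono (ℱ.le t)).aestronglyMeasurable
  have hA_int : Integrable (A t) μ := ⟨hA_meas, by
    rw [hasFiniteIntegral_iff_ofReal (.of_forall hA)]
    exact hAb.trans_lt ENNReal.ofReal_lt_top⟩
  have hM2_eq : (fun ω => M t ω ^ 2) = fun ω => (M t ω ^ 2 - A t ω) + A t ω := by ext ω; ring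
  have hN_int : ∫ ω, (M t ω ^ 2 - A t ω) ∂μ = 0 := by
    rw [hN.integral_eq_of_le ht]
    simp [hM0, hA0]
  refine ⟨hM2_eq ▸ (hN.integrable t).add hA_int, ?_⟩
  rw [hM2_eq, integral_add (hN.integrable t) hA_int, hN_int, zero_add,
    integral_eq_lintegral_of_nonneg_ae (.of_forall hA) hA_meas]
  exact ENNReal.toReal_le_of_le_ofReal hb hAb

end MeasureTheory

section Dyadic

variable {Ω : Type*} {m : MeasurableSpace Ω}

theorem bddAbove_range_min_one (f : ℕ → ℝ) : BddAbove (range fun n => min 1 (f n)) :=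
  ⟨1, by rintro _ ⟨n, rfl⟩; exact min_le_left _ _⟩

noncomputable def dyadicMaxAbs (X : ℝ → Ω → ℝ) (s : ℝ) (n : ℕ) (ω : Ω) : ℝ :=
  (Finset.range (2 ^ n + 1)).sup' Finset.nonempty_range_add_one fun k => |X (k * s / 2 ^ n) ω|

theorem le_dyadicMaxAbs (X : ℝ → Ω → ℝ) (s : ℝ) {n k : ℕ} (hk : k ≤ 2 ^ n) (ω : Ω) :
    |X (k * s / 2 ^ n) ω| ≤ dyadicMaxAbs X s n ω :=
  Finset.le_sup' (fun k : ℕ => |X (k * s / 2 ^ n) ω|) (Finset.mem_range_succ_iff.2 hk)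

theorem dyadicMaxAbs_nonneg (X : ℝ → Ω → ℝ) (s : ℝ) (n : ℕ) (ω : Ω) :
    0 ≤ dyadicMaxAbs X s n ω :=
  (abs_nonneg _).trans (le_dyadicMaxAbs X s (Nat.zero_le _) ω)

theorem dyadicMaxAbs_mono (X : ℝ → Ω → ℝ) (s : ℝ) (ω : Ω) :
    Monotone fun n => dyadicMaxAbs X s n ω := by
  refine monotone_nat_of_le_succ fun n => Finset.sup'_le _ _ fun k hk => ?_
  have hgrid : (k : ℝ) * s / 2 ^ n = ((2 * k : ℕ) : ℝ) * s / 2 ^ (n + 1) := by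
    push_cast
    ring
  rw [hgrid]
  exact le_dyadicMaxAbs X s (by rw [Finset.mem_range_succ_iff] at hk; omega) ω

theorem measurable_dyadicMaxAbs {X : ℝ → Ω → ℝ} (hX : ∀ t, Measurable (X t)) (s : ℝ) (n : ℕ) :
    Measurable (dyadicMaxAbs X s n) := by
  have := Finset.measurable_sup' (Finset.nonempty_range_add_one (n := 2 ^ n))
    (f := fun (k : ℕ) ω => |X (k * s / 2 ^ n) ω|) fun k _ => (hX _).abs
  convert this using 1
  ext ω
  simp [dyadicMaxAbs, Finset.sup'_apply]

end Dyadic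

namespace MeasureTheory.Martingale

variable {Ω : Type*} {m : MeasurableSpace Ω} {μ : Measure Ω} [IsProbabilityMeasure μ]
  {ℱ : Filtration ℝ m} {M : ℝ → Ω → ℝ} {s b : ℝ}

theorem integral_min_one_dyadicMaxAbs_le (hM : Martingale M ℱ μ) (hs : 0 ≤ s) (hb : 0 ≤ b)
    (hM2 : ∀ t ∈ Icc 0 s, Integrable (fun ω => M t ω ^ 2) μ)
    (hM2b : ∀ t ∈ Icc 0 s, ∫ ω, M t ω ^ 2 ∂μ ≤ b) (n : ℕ) :
    ∫ ω, min 1 (dyadicMaxAbs M s n ω) ∂μ ≤ 2 * √b := by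
  set u : ℕ → ℝ := fun k => min (k * s / 2 ^ n) s
  have hu : Monotone u := fun i j hij => min_le_min_right _ (by gcongr)
  have hu_mem (k : ℕ) : u k ∈ Icc 0 s := ⟨le_min (by positivity) hs, min_le_right _ _⟩
  have hmax : dyadicMaxAbs M s n =
      fun ω => (Finset.range (2 ^ n + 1)).sup' Finset.nonempty_range_add_one
        fun k => |M (u k) ω| := by
    ext ω
    refine Finset.sup'_congr _ rfl fun k hk => ?_
    simp only [u]
    have hk : (k : ℝ) ≤ 2 ^ n := by exact_mod_cast Finset.mem_range_succ_iff.1 hk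
    rw [min_eq_left (div_le_of_le_mul₀ (by positivity) hs
      (by rw [mul_comm s]; exact mul_le_mul_of_nonneg_right hk hs))]
  refine integral_min_one_le_of_measureReal_le
    (measurable_dyadicMaxAbs (fun t => (hM.stronglyAdapted t).mono (ℱ.le t) |>.measurable) s n)
    (dyadicMaxAbs_nonneg M s n) hb fun t ht => ?_
  rw [hmax]
  refine ((hM.comp_monotone hu).measureReal_le_sup'_abs_le (fun k => hM2 _ (hu_mem k)) _
    ht).trans ?_
  gcongr
  exact hM2b _ (hu_mem _)

theorem integral_iSup_min_one_dyadicMaxAbs_le (hM : Martingale M ℱ μ) (hs : 0 ≤ s) (hb : 0 ≤ b)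
    (hM2 : ∀ t ∈ Icc 0 s, Integrable (fun ω => M t ω ^ 2) μ)
    (hM2b : ∀ t ∈ Icc 0 s, ∫ ω, M t ω ^ 2 ∂μ ≤ b) :
    Integrable (fun ω => ⨆ n, min 1 (dyadicMaxAbs M s n ω)) μ ∧
      ∫ ω, ⨆ n, min 1 (dyadicMaxAbs M s n ω) ∂μ ≤ 2 * √b := by
  set g : ℕ → Ω → ℝ := fun n ω => min 1 (dyadicMaxAbs M s n ω)
  have hg_mem (n : ℕ) (ω : Ω) : g n ω ∈ Icc 0 1 :=
    ⟨le_min zero_le_one (dyadicMaxAbs_nonneg M s n ω), min_le_left _ _⟩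
  have hg_meas (n : ℕ) : Measurable (g n) := measurable_const.min
    (measurable_dyadicMaxAbs (fun t => (hM.stronglyAdapted t).mono (ℱ.le t) |>.measurable) s n)
  have hbdd (ω : Ω) : BddAbove (range fun n => g n ω) := bddAbove_range_min_one _
  have hsup_mem (ω : Ω) : (⨆ n, g n ω) ∈ Icc 0 1 :=
    ⟨(hg_mem 0 ω).1.trans (le_ciSup (hbdd ω) 0), ciSup_le fun n => (hg_mem n ω).2⟩
  have hlim : Tendsto (fun n => ∫ ω, g n ω ∂μ) atTop (𝓝 (∫ ω, ⨆ n, g n ω ∂μ)) :=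
    tendsto_integral_of_dominated_convergence (fun _ => 1)
      (fun n => (hg_meas n).aestronglyMeasurable)
      (integrable_const 1) (fun n => .of_forall fun ω => by
        rw [norm_of_nonneg (hg_mem n ω).1]; exact (hg_mem n ω).2)
      (.of_forall fun ω => tendsto_atTop_ciSup
        (fun i j hij => min_le_min_left 1 (dyadicMaxAbs_mono M s ω hij)) (hbdd ω))
  refine ⟨.of_bound (Measurable.iSup hg_meas).aestronglyMeasurable 1 (.of_forall fun ω => ?_),
    le_of_tendsto' hlim fun n => integral_min_one_dyadicMaxAbs_le hM hs hb hM2 hM2b n⟩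
  rw [norm_of_nonneg (hsup_mem ω).1]
  exact (hsup_mem ω).2

end MeasureTheory.Martingale

section SqrtDiffusion

variable {Ω : Type*} {mΩ : MeasurableSpace Ω} {P : Measure Ω} {ℱ : Filtration ℝ mΩ}
  {Z M α β : ℝ → Ω → ℝ} {z lam s : ℝ}

theorem abs_sub_sub_le_of_eq_add_integral (hβ : ∀ t ω, |β t ω| ≤ lam)
    (hZ : ∀ t, 0 ≤ t → ∀ ω, Z t ω = z + (∫ u in (0:ℝ)..t, β u ω) + M t ω)
    {t : ℝ} (ht : t ∈ Icc 0 s) (ω : Ω) : |Z t ω - z - M t ω| ≤ lam * s := by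
  rw [hZ t ht.1 ω, show ∀ a b, z + a + b - z - b = a by intros; ring]
  refine (intervalIntegral.norm_integral_le_of_norm_le_const (f := fun u => β u ω)
    fun u _ => hβ u ω).trans ?_
  rw [sub_zero, abs_of_nonneg ht.1]
  exact mul_le_mul_of_nonneg_left ht.2 ((abs_nonneg _).trans (hβ 0 ω))

theorem integral_sq_le_of_eq_add_integral [IsProbabilityMeasure P] (hlam : 0 ≤ lam) (hz : 0 ≤ z)
    (hs : 0 ≤ s) (hZcont : ∀ ω, Continuous fun t => Z t ω) (hZnn : ∀ t ω, 0 ≤ Z t ω)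
    (hβ : ∀ t ω, |β t ω| ≤ lam) (hα : ∀ t ω, |α t ω| ^ 2 ≤ lam)
    (hZ : ∀ t, 0 ≤ t → ∀ ω, Z t ω = z + (∫ u in (0:ℝ)..t, β u ω) + M t ω)
    (hM : Martingale M ℱ P)
    (hN : Martingale (fun t ω => M t ω ^ 2 - ∫ u in (0:ℝ)..t, α u ω ^ 2 * Z u ω) ℱ P)
    (hM0 : ∀ ω, M 0 ω = 0) {t : ℝ} (ht : t ∈ Icc 0 s) :
    Integrable (fun ω => M t ω ^ 2) P ∧ ∫ ω, M t ω ^ 2 ∂P ≤ lam * (s * (z + lam * s)) := by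
  have hEM (t : ℝ) (ht : 0 ≤ t) : ∫ ω, M t ω ∂P = 0 := by
    simp [hM.integral_eq_of_le ht, hM0]
  have hZ_lint : ∫⁻ ω, ENNReal.ofReal (∫ u in (0:ℝ)..s, Z u ω) ∂P
      ≤ ENNReal.ofReal (s * (z + lam * s)) :=
    lintegral_ofReal_intervalIntegral_le (Y := fun t ω => z + lam * s + M t ω) hs hZcont
      (fun t _ ω => hZnn t ω)
      (fun t ht ω => by linarith [(abs_le.1 (abs_sub_sub_le_of_eq_add_integral hβ hZ ht ω)).2])
      (fun t _ => (integrable_const _).add (hM.integrable t))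
      (fun t ht => by simp [integral_add (integrable_const _) (hM.integrable t), hEM t ht.1])
  have hA_le (ω : Ω) : ∫ u in (0:ℝ)..t, α u ω ^ 2 * Z u ω ≤ lam * ∫ u in (0:ℝ)..s, Z u ω :=
    intervalIntegral_mul_le_mul_intervalIntegral (hZcont ω) (fun u => hZnn u ω)
      (fun u => sq_nonneg _) (fun u => sq_abs (α u ω) ▸ hα u ω) ht.1 ht.2
  refine integral_sq_le_of_martingale_sq_sub hN hM0 (fun ω => by simp) ht.1 (by positivity)
    ((hM.stronglyAdapted t).mono (ℱ.le t)).aestronglyMeasurable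
    (fun ω => intervalIntegral.integral_nonneg ht.1 fun u _ => mul_nonneg (sq_nonneg _) (hZnn u ω))
    ?_
  calc ∫⁻ ω, ENNReal.ofReal (∫ u in (0:ℝ)..t, α u ω ^ 2 * Z u ω) ∂P
      ≤ ∫⁻ ω, ENNReal.ofReal lam * ENNReal.ofReal (∫ u in (0:ℝ)..s, Z u ω) ∂P :=
        lintegral_mono fun ω => (ENNReal.ofReal_le_ofReal (hA_le ω)).trans_eq
          (ENNReal.ofReal_mul hlam)
    _ ≤ ENNReal.ofReal lam * ENNReal.ofReal (s * (z + lam * s)) := by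
        rw [lintegral_const_mul' _ _ ENNReal.ofReal_ne_top]
        gcongr
    _ = ENNReal.ofReal (lam * (s * (z + lam * s))) := (ENNReal.ofReal_mul hlam).symm

theorem min_one_abs_sub_le_iSup_dyadicMaxAbs (hs : 0 < s)
    (hZcont : ∀ ω, Continuous fun t => Z t ω) (hβ : ∀ t ω, |β t ω| ≤ lam)
    (hZ : ∀ t, 0 ≤ t → ∀ ω, Z t ω = z + (∫ u in (0:ℝ)..t, β u ω) + M t ω)
    (ω : Ω) {v : ℝ} (hv : v ∈ Icc 0 s) :
    min 1 |Z v ω - z| ≤ lam * s + ⨆ n, min 1 (dyadicMaxAbs M s n ω) := by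
  have hlam : 0 ≤ lam := (abs_nonneg _).trans (hβ 0 ω)
  obtain ⟨k, hk, hlim⟩ := exists_tendsto_dyadic hs hv
  refine le_of_tendsto
    (((continuous_const.min ((hZcont ω).sub continuous_const).abs).tendsto v).comp hlim)
    (.of_forall fun n => ?_)
  set u := (k n : ℝ) * s / 2 ^ n
  have hu : u ∈ Icc 0 s := ⟨by positivity, div_le_of_le_mul₀ (by positivity) hs.le (by
    rw [mul_comm s]; exact mul_le_mul_of_nonneg_right (by exact_mod_cast hk n) hs.le)⟩
  have hZu : |Z u ω - z| ≤ lam * s + |M u ω| := by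
    have := abs_sub_sub_le_of_eq_add_integral hβ hZ hu ω
    calc |Z u ω - z| = |(Z u ω - z - M u ω) + M u ω| := by ring_nf
      _ ≤ lam * s + |M u ω| := (abs_add_le _ _).trans (by linarith)
  calc min 1 |Z u ω - z| ≤ min 1 (lam * s + |M u ω|) := min_le_min_left _ hZu
    _ ≤ lam * s + min 1 |M u ω| :=
        (min_le_min_right _ (le_add_of_nonneg_left (by positivity))).trans
          (min_add_add_left _ _ _).le
    _ ≤ lam * s + ⨆ n, min 1 (dyadicMaxAbs M s n ω) := by
        gcongr
        refine le_trans ?_ (le_ciSup (bddAbove_range_min_one fun n => dyadicMaxAbs M s n ω) n)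
        exact min_le_min_left _ (le_dyadicMaxAbs M s (hk n) ω)

theorem sq_abs_sqrt_stopped_sub_sqrt_le (hs : 0 < s) (hz : 0 ≤ z)
    (hZcont : ∀ ω, Continuous fun t => Z t ω) (hZnn : ∀ t ω, 0 ≤ Z t ω)
    (hβ : ∀ t ω, |β t ω| ≤ lam)
    (hZ : ∀ t, 0 ≤ t → ∀ ω, Z t ω = z + (∫ u in (0:ℝ)..t, β u ω) + M t ω)
    (hM0 : ∀ ω, M 0 ω = 0) {τ : Ω → ℝ}
    (hτ : ∀ ω, τ ω = sInf {t : ℝ | 0 ≤ t ∧ 1 ≤ |√(Z t ω) - √z|}) (ω : Ω) {t : ℝ}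
    (ht : t ∈ Icc 0 s) :
    |√(Z (min t (τ ω)) ω) - √z| ^ 2 ≤ min 1 (lam * s + ⨆ n, min 1 (dyadicMaxAbs M s n ω)) := by
  have hτ0 : 0 ≤ τ ω := hτ ω ▸ Real.sInf_nonneg fun _ h => h.1
  have hu : min t (τ ω) ∈ Icc 0 s := ⟨le_min ht.1 hτ0, (min_le_left _ _).trans ht.2⟩
  have hstopped : |√(Z (min t (τ ω)) ω) - √z| ≤ 1 :=
    le_of_le_sInf_setOf_le (g := fun t => |√(Z t ω) - √z|) (by fun_prop)
      (by simp [hZ 0 le_rfl ω, hM0]) hu.1 ((min_le_right _ _).trans (hτ ω).le)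
  calc |√(Z (min t (τ ω)) ω) - √z| ^ 2 ≤ min 1 |Z (min t (τ ω)) ω - z| :=
        le_min (pow_le_one₀ (abs_nonneg _) hstopped) (abs_sqrt_sub_sqrt_sq_le (hZnn _ ω) hz)
    _ ≤ min 1 (lam * s + ⨆ n, min 1 (dyadicMaxAbs M s n ω)) :=
        le_min (min_le_left _ _) (min_one_abs_sub_le_iSup_dyadicMaxAbs hs hZcont hβ hZ ω hu)

end SqrtDiffusion

/-- The SDE `dZ_t = β_t dt + α_t √Z_t dB_t` is encoded by the decomposition
`Z_t = z + ∫₀ᵗ β_s ds + M_t`, where `M` is a martingale whose quadratic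
variation is `∫₀ᵗ α_s² Z_s ds`, i.e. `M_t² − ∫₀ᵗ α_s² Z_s ds` is a martingale. -/
theorem small_initial_value_estimate (lam : ℝ) (hlam : 1 ≤ lam) :
    ∃ C > (0:ℝ), ∀ {Ω : Type} {mΩ : MeasurableSpace Ω} (P : Measure Ω),
      IsProbabilityMeasure P → ∀ (ℱ : Filtration ℝ mΩ)
      (Z M : ℝ → Ω → ℝ) (α β : ℝ → Ω → ℝ) (z : ℝ) (τ : Ω → ℝ),
      (0 ≤ z) → (z < 2) →
      (∀ ω, Continuous fun t => Z t ω) →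
      (∀ t ω, 0 ≤ Z t ω) →
      (∀ t ω, |β t ω| ≤ lam) →
      (∀ t ω, lam⁻¹ ≤ |α t ω| ^ 2 ∧ |α t ω| ^ 2 ≤ lam) →
      (∀ t, 0 ≤ t → ∀ ω, Z t ω = z + (∫ s in (0:ℝ)..t, β s ω) + M t ω) →
      Martingale M ℱ P →
      Martingale (fun t ω => (M t ω) ^ 2 - ∫ s in (0:ℝ)..t, (α s ω) ^ 2 * Z s ω) ℱ P →
      (∀ ω, M 0 ω = 0) →
      (∀ ω, τ ω = sInf {t : ℝ | 0 ≤ t ∧ 1 ≤ |Real.sqrt (Z t ω) - Real.sqrt z|}) →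
      ∀ s : ℝ, 0 < s →
      (∫ ω, (⨆ t : Set.Icc (0:ℝ) s,
          |Real.sqrt (Z (min (t : ℝ) (τ ω)) ω) - Real.sqrt z| ^ 2) ∂P)
        ≤ lam * s + C * Real.sqrt s := by
  refine ⟨4 * lam, by positivity, ?_⟩
  intro Ω mΩ P hP ℱ Z M α β z τ hz0 hz2 hZcont hZnn hβ hα hZ hM hN hM0 hτ s hs
  have : Nonempty (Icc (0:ℝ) s) := ⟨⟨0, le_rfl, hs.le⟩⟩
  have hterm (ω : Ω) (t : Icc (0:ℝ) s) :=
    sq_abs_sqrt_stopped_sub_sqrt_le hs hz0 hZcont hZnn hβ hZ hM0 hτ ω t.2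
  by_cases hint : Integrable
      (fun ω => ⨆ t : Icc (0:ℝ) s, |√(Z (min (t : ℝ) (τ ω)) ω) - √z| ^ 2) P
  swap
  · rw [integral_undef hint]
    positivity
  obtain hs1 | hs1 := le_or_gt 1 s
  · calc _ ≤ ∫ _ω, (1:ℝ) ∂P := integral_mono hint (integrable_const 1) fun ω =>
          ciSup_le fun t => (hterm ω t).trans (min_le_left _ _)
      _ ≤ lam * s + 4 * lam * √s := by
          simp only [integral_const, probReal_univ, smul_eq_mul, mul_one]
          nlinarith [sqrt_nonneg s]
  have hM2 (t : ℝ) (ht : t ∈ Icc 0 s) := integral_sq_le_of_eq_add_integral (by linarith) hz0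
    hs.le hZcont hZnn hβ (fun t ω => (hα t ω).2) hZ hM hN hM0 ht
  obtain ⟨hG_int, hG⟩ := hM.integral_iSup_min_one_dyadicMaxAbs_le hs.le (by positivity)
    (fun t ht => (hM2 t ht).1) (fun t ht => (hM2 t ht).2)
  calc _ ≤ ∫ ω, (lam * s + ⨆ n, min 1 (dyadicMaxAbs M s n ω)) ∂P :=
        integral_mono hint ((integrable_const _).add hG_int) fun ω =>
          ciSup_le fun t => (hterm ω t).trans (min_le_right _ _)
    _ = lam * s + ∫ ω, ⨆ n, min 1 (dyadicMaxAbs M s n ω) ∂P := by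
        rw [integral_add (integrable_const _) hG_int]
        simp
    _ ≤ lam * s + 4 * lam * √s := by
        gcongr
        exact hG.trans (two_mul_sqrt_le_of_lt_one hlam hz2 hs.le hs1)
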